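/- (Explicit eigenfunction of the two-particle fiber operator.) Let μ ≠ 0, k ∈ T^d and let z ∈ ℝ \ [E_min(k), E_max(k)] satisfy Δ_μ(k;z) = 0. Then the function f(p) = (𝓔_k(p) − z)^{-1} belongs to L²(T^d, η), is nonzero, satisfies f(k−p) = f(p) for all p (i.e. f is an even function of the relative momentum), and h_μ(k)f = z f. -/

import Mathlib

open MeasureTheory Real Filter

noncomputable section

instance fact_two_pi_pos : Fact (0 < 2 * Real.pi) := ⟨by positivity⟩

/-- The `d`-dimensional torus `(ℝ/2πℤ)^d`. -/
abbrev Torus (d : ℕ) : Type := Fin d → AddCircle (2 * Real.pi)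

/-- Cosine as a function on the circle `ℝ/2πℤ`. -/
noncomputable def torusCos : AddCircle (2 * Real.pi) → ℝ := Real.cos_periodic.lift

/-- The one-particle dispersion `ε(p) = 2∑ᵢ (1 − cos pⁱ)` on the torus. -/
noncomputable def eps (d : ℕ) (p : Torus d) : ℝ := 2 * ∑ i, (1 - torusCos (p i))

/-- The normalized Haar measure `η` on the torus `T^d`. -/
noncomputable def η (d : ℕ) : Measure (Torus d) :=
  Measure.pi fun _ => (AddCircle.haarAddCircle : Measure (AddCircle (2 * Real.pi)))

instance (d : ℕ) : IsProbabilityMeasure (η d) := by unfold η; infer_instance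

/-- The two-particle fiber dispersion `𝓔ₖ(p) = ε(k−p) + ε(p)`. -/
noncomputable def calE (d : ℕ) (k p : Torus d) : ℝ := eps d (k - p) + eps d p

/-- `E_min(k) = min_{p ∈ T^d} 𝓔ₖ(p)`. -/
noncomputable def Emin (d : ℕ) (k : Torus d) : ℝ := sInf (Set.range (calE d k))

/-- `E_max(k) = max_{p ∈ T^d} 𝓔ₖ(p)`. -/
noncomputable def Emax (d : ℕ) (k : Torus d) : ℝ := sSup (Set.range (calE d k))

/-- The three-particle dispersion `E(K;p,q) = ε(K−p−q) + ε(p) + ε(q)`. -/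
noncomputable def EE (d : ℕ) (K p q : Torus d) : ℝ := eps d (K - p - q) + eps d p + eps d q

/-- `E_min(K) = min_{p,q ∈ T^d} E(K;p,q)`. -/
noncomputable def E3min (d : ℕ) (K : Torus d) : ℝ :=
  sInf (Set.range fun pq : Torus d × Torus d => EE d K pq.1 pq.2)

/-- `E_max(K) = max_{p,q ∈ T^d} E(K;p,q)`. -/
noncomputable def E3max (d : ℕ) (K : Torus d) : ℝ :=
  sSup (Set.range fun pq : Torus d × Torus d => EE d K pq.1 pq.2)

/-- The two-particle determinant `Δ_μ(k;z) = 1 + μ ∫ (𝓔ₖ(q) − z)⁻¹ dη(q)`. -/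
noncomputable def Delta2 (d : ℕ) (μ : ℝ) (k : Torus d) (z : ℝ) : ℝ :=
  1 + μ * ∫ q, (calE d k q - z)⁻¹ ∂(η d)

/-- The channel determinant `Δ_μ(K,p;z) = 1 + μ ∫ (E(K;p,q) − z)⁻¹ dη(q)`. -/
noncomputable def Delta3 (d : ℕ) (μ : ℝ) (K p : Torus d) (z : ℝ) : ℝ :=
  1 + μ * ∫ q, (EE d K p q - z)⁻¹ ∂(η d)

/-- The point `π ∈ ℝ/2πℤ`. -/
noncomputable def piPt : AddCircle (2 * Real.pi) := ((Real.pi : ℝ) : AddCircle (2 * Real.pi))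

/-! `𝓔ₖ` is continuous on the compact torus, so `z ∉ [E_min(k), E_max(k)]` keeps `𝓔ₖ − z` away
from zero and `f = (𝓔ₖ − z)⁻¹` is continuous, hence in `L²`. The eigenvalue equation
`(𝓔ₖ − z) f = 1 = −μ ∫ f dη` is exactly `Δ_μ(k;z) = 0`. -/

lemma continuous_torusCos : Continuous torusCos :=
  Real.continuous_cos.quotient_liftOn' _

lemma continuous_eps (d : ℕ) : Continuous (eps d) :=
  continuous_const.mul <| continuous_finsetSum _ fun i _ =>
    continuous_const.sub (continuous_torusCos.comp (continuous_apply i))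

lemma continuous_calE (d : ℕ) (k : Torus d) : Continuous (calE d k) :=
  ((continuous_eps d).comp (continuous_const.sub continuous_id)).add (continuous_eps d)

lemma calE_mem_Icc (d : ℕ) (k p : Torus d) : calE d k p ∈ Set.Icc (Emin d k) (Emax d k) :=
  have hbdd := isCompact_range (continuous_calE d k)
  ⟨csInf_le hbdd.bddBelow ⟨p, rfl⟩, le_csSup hbdd.bddAbove ⟨p, rfl⟩⟩

lemma calE_self_sub (d : ℕ) (k p : Torus d) : calE d k (k - p) = calE d k p := by
  rw [calE, calE, sub_sub_cancel, add_comm]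

theorem Continuous.memLp_of_compactSpace {X E : Type*} [TopologicalSpace X] [CompactSpace X]
    [MeasurableSpace X] [OpensMeasurableSpace X] [NormedAddCommGroup E] {μ : Measure X}
    [IsFiniteMeasure μ] {f : X → E} (hf : Continuous f) (p : ENNReal) : MemLp f p μ :=
  hf.memLp_of_hasCompactSupport (HasCompactSupport.of_compactSpace f)

theorem not_ae_eq_zero_of_forall_ne_zero {X M : Type*} [MeasurableSpace X] [Zero M]
    {μ : Measure X} [NeZero μ] {f : X → M} (hf : ∀ x, f x ≠ 0) : ¬ f =ᵐ[μ] 0 :=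
  fun h => let ⟨x, hx⟩ := h.exists; hf x hx

theorem explicit_eigenfunction_general (d : ℕ) (μ : ℝ) (k : Torus d) (z : ℝ)
    (hz : z ∉ Set.Icc (Emin d k) (Emax d k)) (hΔ : Delta2 d μ k z = 0) :
    MemLp (fun p => (calE d k p - z)⁻¹) 2 (η d) ∧
    ¬ ((fun p => (calE d k p - z)⁻¹) =ᵐ[η d] 0) ∧
    (∀ p : Torus d, (calE d k (k - p) - z)⁻¹ = (calE d k p - z)⁻¹) ∧
    (∀ p : Torus d,
      calE d k p * (calE d k p - z)⁻¹ + μ * ∫ q, (calE d k q - z)⁻¹ ∂(η d)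
        = z * (calE d k p - z)⁻¹) := by
  have hne : ∀ p, calE d k p - z ≠ 0 := fun p h => hz (sub_eq_zero.1 h ▸ calE_mem_Icc d k p)
  have hcont : Continuous fun p => (calE d k p - z)⁻¹ :=
    ((continuous_calE d k).sub continuous_const).inv₀ hne
  refine ⟨hcont.memLp_of_compactSpace 2,
    not_ae_eq_zero_of_forall_ne_zero fun p => inv_ne_zero (hne p),
    fun p => by rw [calE_self_sub], fun p => ?_⟩
  rw [Delta2] at hΔ
  rw [eq_neg_of_add_eq_zero_right hΔ]
  field_simp [hne p]
  ring

/-- if `Δ_μ(k;z) = 0` for `z ∉ [E_min(k), E_max(k)]`, then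
`f(p) = (𝓔ₖ(p) − z)⁻¹` is a nonzero even element of `L²(T^d,η)` satisfying
`h_μ(k) f = z f` pointwise. -/
theorem explicit_eigenfunction (d : ℕ) (μ : ℝ) (hμ : μ ≠ 0) (k : Torus d) (z : ℝ)
    (hz : z ∉ Set.Icc (Emin d k) (Emax d k)) (hΔ : Delta2 d μ k z = 0) :
    MemLp (fun p => (calE d k p - z)⁻¹) 2 (η d) ∧
    ¬ ((fun p => (calE d k p - z)⁻¹) =ᵐ[η d] 0) ∧
    (∀ p : Torus d, (calE d k (k - p) - z)⁻¹ = (calE d k p - z)⁻¹) ∧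
    (∀ p : Torus d,
      calE d k p * (calE d k p - z)⁻¹ + μ * ∫ q, (calE d k q - z)⁻¹ ∂(η d)
        = z * (calE d k p - z)⁻¹) :=
  explicit_eigenfunction_general d μ k z hz hΔ
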